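/- arXiv:2502.21009 — 5 statements merged into one kernel-verified Lean document; each statement's English description precedes it below -/
import Mathlib

section
/- Let $W_1 : \mathbb{R} \to \mathbb{R}^{d \times p}$ and $W_2 : \mathbb{R} \to \mathbb{R}^{p \times c}$ be differentiable matrix-valued functions satisfying $W_1'(t) = -A(t) W_2(t)^T$ and $W_2'(t) = -W_1(t)^T A(t)$ for some common matrix-valued function $A(t) \in \mathbb{R}^{d \times c}$. Then $W_1(t)^T W_1(t) - W_2(t) W_2(t)^T$ is constant in $t$. -/
open Matrix

section EntrywiseDeriv

variable {𝕜 : Type*} [NontriviallyNormedField 𝕜] {m n o : Type*} [Fintype n]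

theorem Matrix.hasDerivAt_mul_apply {M : 𝕜 → Matrix m n 𝕜} {N : 𝕜 → Matrix n o 𝕜}
    {M' : Matrix m n 𝕜} {N' : Matrix n o 𝕜} {t : 𝕜}
    (hM : ∀ i j, HasDerivAt (fun t => M t i j) (M' i j) t)
    (hN : ∀ i j, HasDerivAt (fun t => N t i j) (N' i j) t) (i : m) (k : o) :
    HasDerivAt (fun t => (M t * N t) i k) ((M' * N t + M t * N') i k) t := by
  simp only [mul_apply, add_apply, ← Finset.sum_add_distrib]
  exact HasDerivAt.fun_sum fun j _ => (hM i j).mul (hN j k)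

end EntrywiseDeriv

theorem Matrix.eq_of_hasDerivAt_apply_zero {m n : Type*} {F : ℝ → Matrix m n ℝ}
    (hF : ∀ i j t, HasDerivAt (fun t => F t i j) 0 t) (t s : ℝ) : F t = F s := by
  ext i j
  exact is_const_of_deriv_eq_zero (fun u => (hF i j u).differentiableAt)
    (fun u => (hF i j u).deriv) t s

theorem stmt4 (d p c : ℕ)
    (W1 : ℝ → Matrix (Fin d) (Fin p) ℝ) (W2 : ℝ → Matrix (Fin p) (Fin c) ℝ)
    (A : ℝ → Matrix (Fin d) (Fin c) ℝ)
    (h1 : ∀ i j t, HasDerivAt (fun t => W1 t i j) ((-(A t * (W2 t)ᵀ)) i j) t)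
    (h2 : ∀ i j t, HasDerivAt (fun t => W2 t i j) ((-((W1 t)ᵀ * A t)) i j) t) :
    ∀ t s : ℝ, (W1 t)ᵀ * W1 t - W2 t * (W2 t)ᵀ = (W1 s)ᵀ * W1 s - W2 s * (W2 s)ᵀ := by
  refine Matrix.eq_of_hasDerivAt_apply_zero fun i j t => ?_
  have h1t : ∀ i j, HasDerivAt (fun t => (W1 t)ᵀ i j) ((-(A t * (W2 t)ᵀ))ᵀ i j) t :=
    fun i j => h1 j i t
  have h2t : ∀ i j, HasDerivAt (fun t => (W2 t)ᵀ i j) ((-((W1 t)ᵀ * A t))ᵀ i j) t :=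
    fun i j => h2 j i t
  have hderiv := (hasDerivAt_mul_apply h1t (fun i j => h1 i j t) i j).fun_sub
    (hasDerivAt_mul_apply (fun i j => h2 i j t) h2t i j)
  -- both derivatives equal `-(W1ᵀ A W2ᵀ + (W1ᵀ A W2ᵀ)ᵀ)`
  have hcancel : (-(A t * (W2 t)ᵀ))ᵀ * W1 t + (W1 t)ᵀ * -(A t * (W2 t)ᵀ)
      - (-((W1 t)ᵀ * A t) * (W2 t)ᵀ + W2 t * (-((W1 t)ᵀ * A t))ᵀ) = 0 := by
    simp only [transpose_neg, transpose_mul, transpose_transpose, Matrix.neg_mul,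
      Matrix.mul_neg, Matrix.mul_assoc]
    abel
  simpa only [← Matrix.sub_apply, hcancel, Matrix.zero_apply] using hderiv
end

section
/- Let $X \in \mathbb{R}^{n \times d}$, $W_1 \in \mathbb{R}^{d \times p}$, $W_2 \in \mathbb{R}^{p \times c}$, and $Y \in \mathbb{R}^{n \times c}$ with $\mathrm{rank}(Y) = c$ and $X W_1 W_2 = Y$. Suppose further that $W_1^T W_1 = W_2 W_2^T$. Then $\mathrm{rank}(X W_1) = c$. -/
open Matrix

theorem stmt5 (n d p c : ℕ)
    (X : Matrix (Fin n) (Fin d) ℝ) (W1 : Matrix (Fin d) (Fin p) ℝ)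
    (W2 : Matrix (Fin p) (Fin c) ℝ) (Y : Matrix (Fin n) (Fin c) ℝ)
    (hY : Y.rank = c) (hfit : X * W1 * W2 = Y)
    (hbal : W1ᵀ * W1 = W2 * W2ᵀ) :
    (X * W1).rank = c := by
  have h12 : W1.rank = W2.rank := by
    rw [← Matrix.rank_transpose_mul_self W1, hbal, Matrix.rank_self_mul_transpose]
  have hlow : c ≤ (X * W1).rank := by
    calc c = Y.rank := hY.symm
    _ = (X * W1 * W2).rank := by rw [hfit]
    _ ≤ (X * W1).rank := Matrix.rank_mul_le_left _ _
  have hW2c : W2.rank = c := by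
    have h1 : W2.rank ≤ c := by
      simpa using Matrix.rank_le_width W2
    have h2 : c ≤ W2.rank := by
      calc c = (X * W1 * W2).rank := by rw [hfit, hY]
      _ ≤ W2.rank := Matrix.rank_mul_le_right _ _
    omega
  have hhigh : (X * W1).rank ≤ c := by
    calc (X * W1).rank ≤ W1.rank := Matrix.rank_mul_le_right _ _
    _ = c := by rw [h12, hW2c]
  omega
end

section
/- Let $a_i, b_i : \mathbb{R} \to \mathbb{R}$, $i = 1,\dots,p$, evolve under gradient flow of the loss $\mathcal{L} = \frac{1}{2}(Z^{-1}\sum_j a_j b_j - S)^2$, i.e. $a_i' = -b_i (Z^{-2}\sum_j a_j b_j - Z^{-1}S)$ and $b_i' = -a_i (Z^{-2}\sum_j a_j b_j - Z^{-1}S)$. Define $g(t) = Z^{-2}\sum_j a_j(t)b_j(t) - Z^{-1}S$ and $\gamma(t) = \exp(-2\int_0^t g(s)\,ds)$. Then for every $i$ and $t$: $a_i(t) + b_i(t) = \gamma(t)^{1/2}(a_i(0) + b_i(0))$ and $a_i(t) - b_i(t) = \gamma(t)^{-1/2}(a_i(0) - b_i(0))$. -/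
/-! The sum `a i + b i` satisfies the scalar linear equation `x' = -g x` and the difference
`a i - b i` satisfies `x' = g x`; both are solved by an integrating factor, and
`√γ = exp (-∫₀ᵗ g)`. -/

open Real

theorem eq_exp_integral_mul_of_hasDerivAt {g x : ℝ → ℝ} (k : ℝ) (hg : Continuous g)
    (hx : ∀ t, HasDerivAt x (k * g t * x t) t) (t : ℝ) :
    x t = exp (k * ∫ s in (0 : ℝ)..t, g s) * x 0 := by
  set G : ℝ → ℝ := fun t => k * ∫ s in (0 : ℝ)..t, g s
  have hG : ∀ t, HasDerivAt G (k * g t) t := fun t =>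
    ((hg.integral_hasStrictDerivAt 0 t).hasDerivAt).const_mul k
  have hconst : ∀ t, HasDerivAt (fun t => exp (-G t) * x t) 0 t := fun t =>
    ((hG t).neg.exp.mul (hx t)).congr_deriv (by simp only [Pi.neg_apply]; ring)
  have hf : exp (-G t) * x t = exp (-G 0) * x 0 :=
    is_const_of_deriv_eq_zero (fun t => (hconst t).differentiableAt)
      (fun t => (hconst t).deriv) t 0
  have hG0 : G 0 = 0 := by simp [G]
  rw [hG0, neg_zero, exp_zero, one_mul] at hf
  rw [← hf, ← mul_assoc, ← exp_add, add_neg_cancel, exp_zero, one_mul]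

theorem stmt12_general (p : ℕ) (Z S : ℝ)
    (a b : Fin p → ℝ → ℝ)
    (g γ : ℝ → ℝ)
    (hg : g = fun t => Z⁻¹ ^ 2 * ∑ j, a j t * b j t - Z⁻¹ * S)
    (ha : ∀ i t, HasDerivAt (a i) (-(b i t) * g t) t)
    (hb : ∀ i t, HasDerivAt (b i) (-(a i t) * g t) t)
    (hγ : γ = fun t => Real.exp (-2 * ∫ s in (0:ℝ)..t, g s)) :
    ∀ i t, a i t + b i t = Real.sqrt (γ t) * (a i 0 + b i 0) ∧
      a i t - b i t = (Real.sqrt (γ t))⁻¹ * (a i 0 - b i 0) := by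
  have hg_cont : Continuous g := by
    have ha_cont j : Continuous (a j) :=
      continuous_iff_continuousAt.2 fun t => (ha j t).continuousAt
    have hb_cont j : Continuous (b j) :=
      continuous_iff_continuousAt.2 fun t => (hb j t).continuousAt
    rw [hg]
    fun_prop
  intro i t
  have hsqrt : √(γ t) = exp (-∫ s in (0 : ℝ)..t, g s) := by
    rw [hγ, ← exp_half]
    ring_nf
  refine ⟨?_, ?_⟩
  · rw [hsqrt, ← neg_one_mul]
    exact eq_exp_integral_mul_of_hasDerivAt (x := fun t => a i t + b i t) _ hg_cont
      (fun t => ((ha i t).add (hb i t)).congr_deriv (by ring)) t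
  · rw [hsqrt, ← exp_neg, neg_neg, ← one_mul (∫ s in (0 : ℝ)..t, g s)]
    exact eq_exp_integral_mul_of_hasDerivAt (x := fun t => a i t - b i t) _ hg_cont
      (fun t => ((ha i t).sub (hb i t)).congr_deriv (by ring)) t

theorem stmt12 (p : ℕ) (Z S : ℝ) (hZ : 0 < Z)
    (a b : Fin p → ℝ → ℝ)
    (g γ : ℝ → ℝ)
    (hg : g = fun t => Z⁻¹ ^ 2 * ∑ j, a j t * b j t - Z⁻¹ * S)
    (ha : ∀ i t, HasDerivAt (a i) (-(b i t) * g t) t)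
    (hb : ∀ i t, HasDerivAt (b i) (-(a i t) * g t) t)
    (hγ : γ = fun t => Real.exp (-2 * ∫ s in (0:ℝ)..t, g s)) :
    ∀ i t, a i t + b i t = Real.sqrt (γ t) * (a i 0 + b i 0) ∧
      a i t - b i t = (Real.sqrt (γ t))⁻¹ * (a i 0 - b i 0) :=
  stmt12_general p Z S a b g γ hg ha hb hγ
end

section
/- With $\gamma$ solving $\gamma' = -\frac{2}{Z}((\Sigma_0 + \mathcal{S}_0)\gamma^2 - 2S\gamma - (\Sigma_0 - \mathcal{S}_0))$, $\gamma(0) = 1$, $Z > 0$, $\Sigma_0 + \mathcal{S}_0 > 0$, $\Sigma_0 \geq |\mathcal{S}_0|$, and $\Sigma_0^2 - \mathcal{S}_0^2 + S^2 > 0$: the function $\gamma$ is monotone on $[0,\infty)$; it is strictly increasing if $S > \mathcal{S}_0$ and strictly decreasing if $S < \mathcal{S}_0$, and it remains in the interval $(\gamma_-, \gamma_+]$ or $[\gamma_+, \infty)$ accordingly, where $\gamma_\pm = \frac{S \pm \sqrt{\Sigma_0^2 - \mathcal{S}_0^2 + S^2}}{\Sigma_0 + \mathcal{S}_0}$. 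-/
open Set

/-- Integrating factor: if h' = c·h with c continuous, then h t = h 0 · exp(∫₀ᵗ c). -/
lemma lin_ode_sign {h c : ℝ → ℝ} (hc : Continuous c)
    (hh : ∀ t, HasDerivAt h (c t * h t) t) :
    ∀ t, h t = h 0 * Real.exp (∫ s in (0:ℝ)..t, c s) := by
  set C : ℝ → ℝ := fun t => ∫ s in (0:ℝ)..t, c s with hCdef
  have hC : ∀ t, HasDerivAt C (c t) t := fun t =>
    (hc.integral_hasStrictDerivAt 0 t).hasDerivAt
  set g : ℝ → ℝ := fun t => h t * Real.exp (-(C t)) with hgdef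
  have hg : ∀ t, HasDerivAt g 0 t := by
    intro t
    have := (hh t).fun_mul (((hC t).fun_neg).exp)
    refine this.congr_deriv (Eq.symm ?_)
    ring
  have hconst : ∀ t, g t = g 0 :=
    fun t => is_const_of_deriv_eq_zero (fun x => (hg x).differentiableAt)
      (fun x => (hg x).deriv) t 0
  intro t
  have h0 : C 0 = 0 := by simp [hCdef]
  have hgt := hconst t
  simp only [hgdef, h0, neg_zero, Real.exp_zero, mul_one] at hgt
  have : h t * Real.exp (-(C t)) * Real.exp (C t) = h 0 * Real.exp (C t) := by
    rw [hgt]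
  rwa [mul_assoc, ← Real.exp_add, neg_add_cancel, Real.exp_zero, mul_one] at this

theorem stmt15 (Z S S0 Sig0 : ℝ) (hZ : 0 < Z) (h2 : 0 < Sig0 + S0)
    (h1 : |S0| ≤ Sig0) (hD : 0 < Sig0 ^ 2 - S0 ^ 2 + S ^ 2)
    (γ : ℝ → ℝ) (hγ0 : γ 0 = 1)
    (hode : ∀ t, HasDerivAt γ
      (-(2 / Z) * ((Sig0 + S0) * γ t ^ 2 - 2 * S * γ t - (Sig0 - S0))) t)
    (γm γp : ℝ)
    (hγm : γm = (S - Real.sqrt (Sig0 ^ 2 - S0 ^ 2 + S ^ 2)) / (Sig0 + S0))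
    (hγp : γp = (S + Real.sqrt (Sig0 ^ 2 - S0 ^ 2 + S ^ 2)) / (Sig0 + S0)) :
    (MonotoneOn γ (Set.Ici 0) ∨ AntitoneOn γ (Set.Ici 0)) ∧
    (S0 < S → StrictMonoOn γ (Set.Ici 0) ∧ ∀ t ≥ (0:ℝ), γm < γ t ∧ γ t ≤ γp) ∧
    (S < S0 → StrictAntiOn γ (Set.Ici 0) ∧ ∀ t ≥ (0:ℝ), γp ≤ γ t) := by
  have h2' : (Sig0 + S0) ≠ 0 := ne_of_gt h2
  set r := Real.sqrt (Sig0 ^ 2 - S0 ^ 2 + S ^ 2) with hr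
  have hrpos : 0 < r := Real.sqrt_pos.mpr hD
  have hr2 : r ^ 2 = Sig0 ^ 2 - S0 ^ 2 + S ^ 2 := Real.sq_sqrt hD.le
  have hS02 : S0 ^ 2 ≤ Sig0 ^ 2 := by nlinarith [abs_nonneg S0, sq_abs S0, le_abs_self Sig0]
  have hrS : S ≤ r := by
    calc S ≤ |S| := le_abs_self S
    _ = Real.sqrt (S ^ 2) := (Real.sqrt_sq_eq_abs S).symm
    _ ≤ r := Real.sqrt_le_sqrt (by nlinarith)
  have hmp : γm < γp := by
    rw [hγm, hγp, div_lt_div_iff_of_pos_right h2]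
    linarith
  have hm1 : γm < 1 := by
    have : γm ≤ 0 := by
      rw [hγm]
      exact div_nonpos_of_nonpos_of_nonneg (by linarith) h2.le
    linarith
  -- key algebraic identity
  have qq : ∀ x : ℝ, (Sig0 + S0) * ((x - γp) * (x - γm))
      = (Sig0 + S0) * x ^ 2 - 2 * S * x - (Sig0 - S0) := by
    intro x
    have hap : (Sig0 + S0) * γp = S + r := by rw [hγp]; field_simp
    have ham : (Sig0 + S0) * γm = S - r := by rw [hγm]; field_simp
    have e : (Sig0 + S0) * (((Sig0 + S0) * ((x - γp) * (x - γm))))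
        = ((Sig0 + S0) * x - (S + r)) * ((Sig0 + S0) * x - (S - r)) := by
      linear_combination ((Sig0 + S0) * γm - (Sig0 + S0) * x) * hap
        + ((S + r) - (Sig0 + S0) * x) * ham
    have e2 : ((Sig0 + S0) * x - (S + r)) * ((Sig0 + S0) * x - (S - r))
        = (Sig0 + S0) * ((Sig0 + S0) * x ^ 2 - 2 * S * x - (Sig0 - S0)) := by
      linear_combination (-1 : ℝ) * hr2
    have := e.trans e2
    exact mul_left_cancel₀ h2' this
  -- h and its linear ODE
  set h : ℝ → ℝ := fun t => (γ t - γp) * (γ t - γm) with hhdef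
  set c : ℝ → ℝ := fun t => -(2 / Z) * (Sig0 + S0) * (2 * γ t - γp - γm) with hcdef
  have hγdiff : Differentiable ℝ γ := fun t => (hode t).differentiableAt
  have hγcont : Continuous γ := hγdiff.continuous
  have hccont : Continuous c :=
    continuous_const.mul (((continuous_const.mul hγcont).sub continuous_const).sub continuous_const)
  have hh : ∀ t, HasDerivAt h (c t * h t) t := by
    intro t
    have H := ((hode t).sub_const γp).fun_mul ((hode t).sub_const γm)
    refine H.congr_deriv (Eq.symm ?_)
    simp only [hcdef, hhdef]
    linear_combination (-(2 / Z) * (2 * γ t - γp - γm)) * (qq (γ t))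
  have hsign := lin_ode_sign hccont hh
  have h0val : (Sig0 + S0) * h 0 = 2 * (S0 - S) := by
    have := qq 1
    simp only [hhdef, hγ0] at *
    linarith
  have hZ2 : 0 < 2 / Z := div_pos two_pos hZ
  -- deriv formula
  have hderiv : ∀ t, deriv γ t = -(2 / Z) * ((Sig0 + S0) * h t) := by
    intro t
    rw [(hode t).deriv, ← qq (γ t)]
  rcases lt_trichotomy S0 S with hc1 | hc1 | hc1
  · -- S0 < S : strictly increasing
    have h0neg : h 0 < 0 := by nlinarith
    have hneg : ∀ t, h t < 0 := fun t => by
      rw [hsign t]; exact mul_neg_of_neg_of_pos h0neg (Real.exp_pos _)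
    have hbnd : ∀ t : ℝ, γm < γ t ∧ γ t < γp := by
      intro t
      have ht := hneg t
      simp only [hhdef] at ht
      constructor
      · by_contra hx; push_neg at hx; nlinarith
      · by_contra hx; push_neg at hx; nlinarith
    have hpos : ∀ t, 0 < deriv γ t := by
      intro t
      rw [hderiv t]
      have : -(2 / Z) * ((Sig0 + S0) * h t) = (2 / Z) * ((Sig0 + S0) * (-h t)) := by ring
      rw [this]
      exact mul_pos hZ2 (mul_pos h2 (neg_pos.mpr (hneg t)))
    have hsm : StrictMono γ := strictMono_of_deriv_pos hpos
    refine ⟨Or.inl (hsm.monotone.monotoneOn _),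
      fun _ => ⟨hsm.strictMonoOn _, fun t _ => ⟨(hbnd t).1, (hbnd t).2.le⟩⟩,
      fun hlt => absurd hlt (by linarith)⟩
  · -- S0 = S : constant
    have h00 : h 0 = 0 := by
      have : (Sig0 + S0) * h 0 = 0 := by rw [h0val, hc1]; ring
      exact (mul_eq_zero.mp this).resolve_left h2'
    have hz : ∀ t, h t = 0 := fun t => by rw [hsign t, h00, zero_mul]
    have hmem : ∀ t, γ t = γm ∨ γ t = γp := by
      intro t
      have := hz t
      simp only [hhdef, mul_eq_zero, sub_eq_zero] at this
      tauto
    have hp1 : γp = 1 := by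
      rcases hmem 0 with hx | hx <;> rw [hγ0] at hx
      · exact absurd hx.symm (ne_of_lt hm1)
      · exact hx.symm
    have hAopen : IsOpen {t : ℝ | γm < γ t} := isOpen_lt continuous_const hγcont
    have hAclosed : IsClosed {t : ℝ | γm < γ t} := by
      have : {t : ℝ | γm < γ t} = γ ⁻¹' {γp} := by
        ext t
        simp only [mem_setOf_eq, mem_preimage, mem_singleton_iff]
        constructor
        · intro ht
          rcases hmem t with hx | hx
          · rw [hx] at ht; exact absurd ht (lt_irrefl _)
          · exact hx
        · intro ht; rw [ht]; exact hmp
      rw [this]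
      exact isClosed_singleton.preimage hγcont
    have hA : {t : ℝ | γm < γ t} = univ := by
      rcases isClopen_iff.mp ⟨hAclosed, hAopen⟩ with he | he
      · exfalso
        have : (0:ℝ) ∈ {t : ℝ | γm < γ t} := by simp [hγ0, hm1]
        rw [he] at this; exact this
      · exact he
    have hconst : ∀ t, γ t = γp := by
      intro t
      have ht : γm < γ t := by
        have : t ∈ ({t : ℝ | γm < γ t}) := by rw [hA]; trivial
        exact this
      rcases hmem t with hx | hx
      · rw [hx] at ht; exact absurd ht (lt_irrefl _)
      · exact hx
    refine ⟨Or.inl ?_, fun hlt => absurd hlt (by linarith),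
      fun hlt => absurd hlt (by linarith)⟩
    intro x _ y _ _
    rw [hconst x, hconst y]
  · -- S < S0 : strictly decreasing
    have h0pos : 0 < h 0 := by nlinarith
    have hpos : ∀ t, 0 < h t := fun t => by
      rw [hsign t]; exact mul_pos h0pos (Real.exp_pos _)
    have hp1 : γp < 1 := by
      have := h0pos
      simp only [hhdef, hγ0] at this
      nlinarith
    have hout : ∀ t, γ t < γm ∨ γp < γ t := by
      intro t
      have ht := hpos t
      simp only [hhdef] at ht
      rcases lt_or_ge (γ t) γm with hx | hx
      · exact Or.inl hx
      · right; by_contra hy; push_neg at hy; nlinarith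
    have hAopen : IsOpen {t : ℝ | γp < γ t} := isOpen_lt continuous_const hγcont
    have hAclosed : IsClosed {t : ℝ | γp < γ t} := by
      have : {t : ℝ | γp < γ t}ᶜ = {t : ℝ | γ t < γm} := by
        ext t
        simp only [mem_compl_iff, mem_setOf_eq, not_lt]
        constructor
        · intro ht
          rcases hout t with hx | hx
          · exact hx
          · exact absurd ht (not_le.mpr hx)
        · intro ht; linarith
      rw [← isOpen_compl_iff, this]
      exact isOpen_lt hγcont continuous_const
    have hA : {t : ℝ | γp < γ t} = univ := by
      rcases isClopen_iff.mp ⟨hAclosed, hAopen⟩ with he | he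
      · exfalso
        have : (0:ℝ) ∈ {t : ℝ | γp < γ t} := by simp [hγ0, hp1]
        rw [he] at this; exact this
      · exact he
    have hgt : ∀ t, γp < γ t := by
      intro t
      have : t ∈ ({t : ℝ | γp < γ t}) := by rw [hA]; trivial
      exact this
    have hneg : ∀ t, deriv γ t < 0 := by
      intro t
      rw [hderiv t]
      have e : -(2 / Z) * ((Sig0 + S0) * h t) = -((2 / Z) * ((Sig0 + S0) * h t)) := by
        ring
      rw [e, neg_lt_zero]
      exact mul_pos hZ2 (mul_pos h2 (hpos t))
    have hsa : StrictAnti γ := strictAnti_of_deriv_neg hneg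
    exact ⟨Or.inr (hsa.antitone.antitoneOn _),
      fun hlt => absurd hlt (by linarith),
      fun _ => ⟨hsa.strictAntiOn _, fun t _ => (hgt t).le⟩⟩
end

section
/- Let $\widetilde{W}_1, \widetilde{W}_2 : \mathbb{R} \to \mathbb{R}^{c\times c}$ be diagonal matrix solutions of $\widetilde{W}_1' = -\widetilde{W}_1 \widetilde{W}_2 \widetilde{W}_2^T + P \widetilde{W}_2^T$ and $\widetilde{W}_2' = -\widetilde{W}_1^T \widetilde{W}_1 \widetilde{W}_2 + \widetilde{W}_1^T P$ with $P$ diagonal and $\widetilde{W}_1(0) = \widetilde{W}_2(0) = A$ diagonal. Then $\widetilde{W}_1(t) = \widetilde{W}_2(t)$ for all $t$, and each diagonal entry $\alpha_i$ satisfies the decoupled scalar ODE $\alpha_i' = -\alpha_i^3 + \rho_i \alpha_i$ where $\rho_i$ is the $i$-th diagonal entry of $P$. -/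
open Matrix

/-! Since both layers are diagonal, the flow splits into the scalar systems
`a' = -a b² + ρ b`, `b' = -a² b + a ρ`, one per mode. Their difference solves the linear equation
`(a - b)' = (a b - ρ) (a - b)` and vanishes at `0`, hence everywhere by the integrating factor;
substituting `b = a` gives `a' = -a³ + ρ a`. -/

namespace Matrix.IsDiag

variable {n α : Type*} [Fintype n] [NonUnitalNonAssocSemiring α] {M N : Matrix n n α}

theorem mul_apply_self_of_left (hM : M.IsDiag) (i : n) : (M * N) i i = M i i * N i i := by
  rw [mul_apply]
  exact Finset.sum_eq_single_of_mem i (Finset.mem_univ i) fun k _ hk => by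
    rw [hM hk.symm, zero_mul]

theorem mul_apply_self_of_right (hN : N.IsDiag) (i : n) : (M * N) i i = M i i * N i i := by
  rw [mul_apply]
  exact Finset.sum_eq_single_of_mem i (Finset.mem_univ i) fun k _ hk => by
    rw [hN hk, mul_zero]

end Matrix.IsDiag

theorem eq_mul_exp_integral_of_hasDerivAt_mul {u g : ℝ → ℝ} (hg : Continuous g)
    (hu : ∀ t, HasDerivAt u (g t * u t) t) (t₀ t : ℝ) :
    u t = u t₀ * Real.exp (∫ s in t₀..t, g s) := by
  set G : ℝ → ℝ := fun t => ∫ s in t₀..t, g s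
  have hG : ∀ t, HasDerivAt G (g t) t := fun t =>
    intervalIntegral.integral_hasDerivAt_right (hg.intervalIntegrable _ _)
      hg.stronglyMeasurable.stronglyMeasurableAtFilter hg.continuousAt
  have hconst : ∀ t, HasDerivAt (fun t => u t * Real.exp (-G t)) 0 t := fun t => by
    refine ((hu t).mul (hG t).neg.exp).congr_deriv ?_
    simp only [Pi.neg_apply]
    ring
  have hφ := is_const_of_deriv_eq_zero (fun x => (hconst x).differentiableAt)
    (fun x => (hconst x).deriv) t t₀
  simp only [G, intervalIntegral.integral_same, neg_zero, Real.exp_zero, mul_one] at hφ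
  rw [← hφ, mul_assoc, ← Real.exp_add, neg_add_cancel, Real.exp_zero, mul_one]

theorem eq_of_hasDerivAt_balanced {a b : ℝ → ℝ} {ρ : ℝ}
    (ha : ∀ t, HasDerivAt a (-(a t * b t * b t) + ρ * b t) t)
    (hb : ∀ t, HasDerivAt b (-(a t * a t * b t) + a t * ρ) t) (h₀ : a 0 = b 0) :
    a = b := by
  have hcont : Continuous fun t => a t * b t - ρ :=
    ((continuous_iff_continuousAt.2 fun t => (ha t).continuousAt).mul
      (continuous_iff_continuousAt.2 fun t => (hb t).continuousAt)).sub continuous_const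
  have hdiff : ∀ t, HasDerivAt (a - b) ((a t * b t - ρ) * (a - b) t) t := fun t => by
    refine ((ha t).sub (hb t)).congr_deriv ?_
    simp only [Pi.sub_apply]
    ring
  funext t
  have := eq_mul_exp_integral_of_hasDerivAt_mul hcont hdiff 0 t
  rwa [Pi.sub_apply, Pi.sub_apply, h₀, sub_self, zero_mul, sub_eq_zero] at this

theorem stmt18_general (c : ℕ)
    (W1 W2 : ℝ → Matrix (Fin c) (Fin c) ℝ)
    (P A : Matrix (Fin c) (Fin c) ℝ)
    (hdiag1 : ∀ t, (W1 t).IsDiag) (hdiag2 : ∀ t, (W2 t).IsDiag)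
    (h1 : ∀ i j t, HasDerivAt (fun t => W1 t i j)
      ((-(W1 t * W2 t * (W2 t)ᵀ) + P * (W2 t)ᵀ) i j) t)
    (h2 : ∀ i j t, HasDerivAt (fun t => W2 t i j)
      ((-((W1 t)ᵀ * W1 t * W2 t) + (W1 t)ᵀ * P) i j) t)
    (hinit1 : W1 0 = A) (hinit2 : W2 0 = A) :
    (∀ t, W1 t = W2 t) ∧
    ∀ i t, HasDerivAt (fun t => W1 t i i)
      (-(W1 t i i) ^ 3 + P i i * W1 t i i) t := by
  have ha : ∀ i t, HasDerivAt (fun t => W1 t i i)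
      (-(W1 t i i * W2 t i i * W2 t i i) + P i i * W2 t i i) t := fun i t => by
    simpa only [Matrix.add_apply, Matrix.neg_apply, transpose_apply,
      IsDiag.mul_apply_self_of_right (hdiag2 t).transpose,
      IsDiag.mul_apply_self_of_right (hdiag2 t)] using h1 i i t
  have hb : ∀ i t, HasDerivAt (fun t => W2 t i i)
      (-(W1 t i i * W1 t i i * W2 t i i) + W1 t i i * P i i) t := fun i t => by
    simpa only [Matrix.add_apply, Matrix.neg_apply, transpose_apply,
      IsDiag.mul_apply_self_of_right (hdiag2 t), IsDiag.mul_apply_self_of_right (hdiag1 t),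
      IsDiag.mul_apply_self_of_left (hdiag1 t).transpose] using h2 i i t
  have hmode : ∀ i t, W1 t i i = W2 t i i := fun i =>
    congrFun (eq_of_hasDerivAt_balanced (ha i) (hb i) (by rw [hinit1, hinit2]))
  have heq : ∀ t, W1 t = W2 t := fun t => by
    rw [← (hdiag1 t).diagonal_diag, ← (hdiag2 t).diagonal_diag]
    exact congrArg diagonal (funext fun i => hmode i t)
  refine ⟨heq, fun i t => ?_⟩
  convert ha i t using 1
  rw [← hmode]
  ring

theorem stmt18 (c : ℕ)
    (W1 W2 : ℝ → Matrix (Fin c) (Fin c) ℝ)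
    (P A : Matrix (Fin c) (Fin c) ℝ)
    (hP : P.IsDiag) (hA : A.IsDiag)
    (hdiag1 : ∀ t, (W1 t).IsDiag) (hdiag2 : ∀ t, (W2 t).IsDiag)
    (h1 : ∀ i j t, HasDerivAt (fun t => W1 t i j)
      ((-(W1 t * W2 t * (W2 t)ᵀ) + P * (W2 t)ᵀ) i j) t)
    (h2 : ∀ i j t, HasDerivAt (fun t => W2 t i j)
      ((-((W1 t)ᵀ * W1 t * W2 t) + (W1 t)ᵀ * P) i j) t)
    (hinit1 : W1 0 = A) (hinit2 : W2 0 = A) :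
    (∀ t, W1 t = W2 t) ∧
    ∀ i t, HasDerivAt (fun t => W1 t i i)
      (-(W1 t i i) ^ 3 + P i i * W1 t i i) t :=
  stmt18_general c W1 W2 P A hdiag1 hdiag2 h1 h2 hinit1 hinit2
end
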